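/- arXiv:1306.0708 — 3 statements merged into one kernel-verified Lean document; each statement's English description precedes it below -/
import Mathlib

section
/- A real 2×2×2 tensor T = ((a₁,a₂);(b₁,b₂)) has rank three if and only if Δ(T) < 0, or else the vectors (a₁;a₂), (b₁;b₂) in ℝ⁴ are linearly independent, the vectors (a₁;b₁), (a₂;b₂) in ℝ⁴ are linearly independent, Δ(T) = 0, and Θ(T) ≠ 0. -/
open Matrix BigOperators

/-- Cayley hyperdeterminant (up to sign) of a 2×2×2 tensor given by matrix slices A, B. -/
noncomputable def Delta {F : Type*} [Field F] (A B : Matrix (Fin 2) (Fin 2) F) : F :=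
  ((A + B).det - (A - B).det) ^ 2 / 4 - 4 * A.det * B.det

/-- Rank of a 2×2×2 tensor, given as a pair of 2×2 matrix slices. -/
noncomputable def trank3 {F : Type*} [Field F] (T : Fin 2 → Matrix (Fin 2) (Fin 2) F) : ℕ :=
  sInf {r | ∃ u v w : Fin r → Fin 2 → F, ∀ k i j, T k i j = ∑ s, u s k * v s i * w s j}

/-- Rank of a 2×2×2×2 tensor, given as a 2×2 array of 2×2 matrix slices. -/
noncomputable def trank4 {F : Type*} [Field F] (T : Fin 2 → Fin 2 → Matrix (Fin 2) (Fin 2) F) : ℕ :=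
  sInf {r | ∃ u v w z : Fin r → Fin 2 → F,
    ∀ k l i j, T k l i j = ∑ s, u s k * v s l * w s i * z s j}

/-- The 2×2 matrix with columns u and v. -/
def col2 {F : Type*} [Field F] (u v : Fin 2 → F) : Matrix (Fin 2) (Fin 2) F :=
  Matrix.of fun i j => ![u, v] j i

/-!
If `T = ∑ₛ uₛ ⊗ vₛ ⊗ wₛ` has two terms, its slices are `T k = Vᵀ * diagonal (U · k) * W`. Since `Δ`
is the discriminant of the binary form `(x, y) ↦ det (x A + y B)`, it changes by squares of
determinants, and `Δ(T) = (det U * det V * det W)²`. So `Δ ≥ 0`, and if `Δ = 0` one factor matrix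
is singular: a singular `U` or `W` makes the slices along the first or the last mode dependent,
and a singular `V` forces `Θ = 0`, `Θ` being the sum of the determinants of the slices along the
last mode.

Conversely, changing basis in the first mode to two independent roots of the binary form (they
exist when `Δ > 0`) makes both slices singular, i.e. rank one. When `Δ = 0`, a dependence among
the slices along the first (or last) mode gives a zero slice after a change of basis, and `Θ = 0`
makes both slices along the last mode singular. Finally every real tensor has rank at most three:
a real root of the binary form yields one rank-one slice, and if `Δ < 0` then negating a column of
`B` makes `Δ` positive at the price of one rank-one term.
-/

variable {F : Type*}

def swapModes (T : Fin 2 → Matrix (Fin 2) (Fin 2) F) : Fin 2 → Matrix (Fin 2) (Fin 2) F :=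
  fun j => of fun i k => T k i j

@[simp]
theorem swapModes_apply (T : Fin 2 → Matrix (Fin 2) (Fin 2) F) (i j k : Fin 2) :
    swapModes T j i k = T k i j :=
  rfl

section Decomposition

variable [CommRing F]

def IsCPDecomp {r : ℕ} (T : Fin 2 → Matrix (Fin 2) (Fin 2) F) (u v w : Fin r → Fin 2 → F) :
    Prop :=
  ∀ k i j, T k i j = ∑ s, u s k * v s i * w s j

def HasCPDecomp (T : Fin 2 → Matrix (Fin 2) (Fin 2) F) (r : ℕ) : Prop :=
  ∃ u v w : Fin r → Fin 2 → F, IsCPDecomp T u v w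

def HasOuterDecomp (M : Matrix (Fin 2) (Fin 2) F) (r : ℕ) : Prop :=
  ∃ v w : Fin r → Fin 2 → F, ∀ i j, M i j = ∑ s, v s i * w s j

variable {T S : Fin 2 → Matrix (Fin 2) (Fin 2) F} {r r' : ℕ}

theorem hasCPDecomp_zero (r : ℕ) : HasCPDecomp (0 : Fin 2 → Matrix (Fin 2) (Fin 2) F) r :=
  ⟨0, 0, 0, fun _ _ _ => by simp⟩

theorem HasCPDecomp.add (hS : HasCPDecomp S r) (hT : HasCPDecomp T r') :
    HasCPDecomp (S + T) (r + r') := by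
  obtain ⟨u, v, w, hS⟩ := hS
  obtain ⟨u', v', w', hT⟩ := hT
  refine ⟨Fin.append u u', Fin.append v v', Fin.append w w', fun k i j => ?_⟩
  simp [Fin.sum_univ_add, hS k i j, hT k i j]

theorem HasCPDecomp.mono (h : HasCPDecomp T r) (hr : r ≤ r') : HasCPDecomp T r' := by
  obtain ⟨n, rfl⟩ := Nat.exists_eq_add_of_le hr
  simpa using h.add (hasCPDecomp_zero n)

theorem HasCPDecomp.mapFirst (G : Matrix (Fin 2) (Fin 2) F) (h : HasCPDecomp T r) :
    HasCPDecomp (fun k => ∑ l, G k l • T l) r := by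
  obtain ⟨u, v, w, h⟩ := h
  refine ⟨fun s k => ∑ l, G k l * u s l, v, w, fun k i j => ?_⟩
  simp only [Matrix.sum_apply, Matrix.smul_apply, smul_eq_mul, h _ i j, Finset.mul_sum,
    Finset.sum_mul]
  rw [Finset.sum_comm]
  simp only [mul_assoc]

theorem HasCPDecomp.of_mapFirst {G : Matrix (Fin 2) (Fin 2) F} (hG : IsUnit G.det)
    (h : HasCPDecomp (fun k => ∑ l, G k l • T l) r) : HasCPDecomp T r := by
  convert h.mapFirst G⁻¹ using 1
  funext k
  simp_rw [Finset.smul_sum, smul_smul]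
  rw [Finset.sum_comm]
  simp_rw [← Finset.sum_smul, ← Matrix.mul_apply, Matrix.nonsing_inv_mul G hG, Matrix.one_apply,
    ite_smul, one_smul, zero_smul, Finset.sum_ite_eq, Finset.mem_univ, if_true]

theorem IsCPDecomp.swapModes {u v w : Fin r → Fin 2 → F} (h : IsCPDecomp T u v w) :
    IsCPDecomp (swapModes T) w v u := fun k i j => by
  simp only [_root_.swapModes, of_apply, h j i k]
  exact Finset.sum_congr rfl fun s _ => by ring

theorem hasCPDecomp_swapModes_iff : HasCPDecomp (swapModes T) r ↔ HasCPDecomp T r :=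
  ⟨fun ⟨u, v, w, h⟩ => ⟨w, v, u, h.swapModes⟩, fun ⟨u, v, w, h⟩ => ⟨w, v, u, h.swapModes⟩⟩

theorem hasOuterDecomp_zero : HasOuterDecomp (0 : Matrix (Fin 2) (Fin 2) F) 0 :=
  ⟨0, 0, fun _ _ => by simp⟩

theorem hasOuterDecomp_two (M : Matrix (Fin 2) (Fin 2) F) : HasOuterDecomp M 2 :=
  ⟨fun s i => M i s, fun s => (1 : Matrix (Fin 2) (Fin 2) F) s, fun i j => by
    simp [← Matrix.mul_apply]⟩

theorem hasCPDecomp_of_slices {r₀ r₁ : ℕ} (h₀ : HasOuterDecomp (T 0) r₀)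
    (h₁ : HasOuterDecomp (T 1) r₁) : HasCPDecomp T (r₀ + r₁) := by
  obtain ⟨v₀, w₀, h₀⟩ := h₀
  obtain ⟨v₁, w₁, h₁⟩ := h₁
  refine ⟨Fin.append (fun _ => ![1, 0]) (fun _ => ![0, 1]), Fin.append v₀ v₁, Fin.append w₀ w₁,
    fun k i j => ?_⟩
  fin_cases k <;> simp [Fin.sum_univ_add, h₀, h₁]

end Decomposition

theorem hasOuterDecomp_one_of_det_eq_zero [Field F] {M : Matrix (Fin 2) (Fin 2) F}
    (h : M.det = 0) : HasOuterDecomp M 1 := by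
  rw [det_fin_two] at h
  by_cases h₀₀ : M 0 0 = 0
  · obtain h₀₁ | h₁₀ : M 0 1 = 0 ∨ M 1 0 = 0 := by simpa [h₀₀] using h
    · exact ⟨fun _ => ![0, 1], fun _ => M 1, fun i j => by
        fin_cases i <;> fin_cases j <;> simp [*]⟩
    · exact ⟨fun _ i => M i 1, fun _ => ![0, 1], fun i j => by
        fin_cases i <;> fin_cases j <;> simp [*]⟩
  · refine ⟨fun _ i => M i 0, fun _ => ![1, M 0 1 / M 0 0], fun i j => ?_⟩
    fin_cases i <;> fin_cases j <;> simp
    · field_simp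
    · field_simp
      linear_combination h

theorem trank3_eq_three_iff [Field F] {T : Fin 2 → Matrix (Fin 2) (Fin 2) F}
    (h3 : HasCPDecomp T 3) : trank3 T = 3 ↔ ¬HasCPDecomp T 2 := by
  change sInf {r | HasCPDecomp T r} = 3 ↔ _
  constructor
  · intro h h2
    have : sInf {r | HasCPDecomp T r} ≤ 2 := Nat.sInf_le h2
    omega
  · intro h2
    refine le_antisymm (Nat.sInf_le h3) (le_csInf ⟨3, h3⟩ fun r hr => ?_)
    by_contra hlt
    exact h2 (hr.mono (by omega))

section Hyperdeterminant

theorem det_smul_add_smul [CommRing F] (A B : Matrix (Fin 2) (Fin 2) F) (x y : F) :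
    (x • A + y • B).det
      = A.det * x ^ 2 + (adjugate A * B).trace * (x * y) + B.det * y ^ 2 := by
  simp [det_fin_two, adjugate_fin_two, trace_fin_two, vecMul, dotProduct, Fin.sum_univ_two]
  ring

variable [Field F]

theorem delta_eq_discrim [NeZero (2 : F)] (A B : Matrix (Fin 2) (Fin 2) F) :
    Delta A B = discrim A.det (adjugate A * B).trace B.det := by
  have h4 : (4 : F) ≠ 0 := by
    simpa [show (4 : F) = 2 ^ 2 by norm_num] using pow_ne_zero 2 (two_ne_zero (α := F))
  simp [Delta, discrim, det_fin_two, adjugate_fin_two, trace_fin_two, vecMul, dotProduct,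
    Fin.sum_univ_two]
  field_simp
  ring

theorem delta_swapModes [NeZero (2 : F)] (T : Fin 2 → Matrix (Fin 2) (Fin 2) F) :
    Delta (swapModes T 0) (swapModes T 1) = Delta (T 0) (T 1) := by
  simp [delta_eq_discrim, discrim, det_fin_two, adjugate_fin_two, trace_fin_two, vecMul,
    dotProduct, Fin.sum_univ_two]
  ring

theorem delta_mul_mul (P Q A B : Matrix (Fin 2) (Fin 2) F) :
    Delta (P * A * Q) (P * B * Q) = (P.det * Q.det) ^ 2 * Delta A B := by
  have hadd : P * A * Q + P * B * Q = P * (A + B) * Q := by noncomm_ring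
  have hsub : P * A * Q - P * B * Q = P * (A - B) * Q := by noncomm_ring
  simp only [Delta, hadd, hsub, det_mul]
  ring

theorem delta_diagonal [NeZero (2 : F)] (d e : Fin 2 → F) :
    Delta (diagonal d) (diagonal e) = (d 0 * e 1 - d 1 * e 0) ^ 2 := by
  rw [delta_eq_discrim, adjugate_fin_two]
  simp [discrim, trace_fin_two, vecMul_diagonal]
  ring

end Hyperdeterminant

section LowerBound

variable [Field F] {T : Fin 2 → Matrix (Fin 2) (Fin 2) F} {u v w : Fin 2 → Fin 2 → F}

theorem IsCPDecomp.slice_eq (h : IsCPDecomp T u v w) (k : Fin 2) :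
    T k = (of v)ᵀ * diagonal (fun s => u s k) * of w := by
  ext i j
  rw [h k i j, Matrix.mul_apply]
  simp only [Matrix.mul_diagonal, transpose_apply, of_apply]
  exact Finset.sum_congr rfl fun s _ => by ring

theorem IsCPDecomp.det_slice (h : IsCPDecomp T u v w) (k : Fin 2) :
    (T k).det = (of v).det * (u 0 k * u 1 k) * (of w).det := by
  rw [h.slice_eq k, det_mul, det_mul, det_transpose, det_diagonal, Fin.prod_univ_two]

theorem IsCPDecomp.delta_eq [NeZero (2 : F)] (h : IsCPDecomp T u v w) :
    Delta (T 0) (T 1) = ((of u).det * (of v).det * (of w).det) ^ 2 := by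
  rw [h.slice_eq 0, h.slice_eq 1, delta_mul_mul, delta_diagonal, det_transpose,
    det_fin_two (of u)]
  simp only [of_apply]
  ring

theorem IsCPDecomp.not_linearIndependent (h : IsCPDecomp T u v w) (hu : (of u).det = 0) :
    ¬LinearIndependent F T := by
  obtain ⟨g, hg, hug⟩ := exists_mulVec_eq_zero_iff.mpr hu
  refine Fintype.not_linearIndependent_iff.mpr ⟨g, ?_, Function.ne_iff.mp hg⟩
  ext i j
  have hug' (s : Fin 2) : ∑ k, u s k * g k = 0 := congrFun hug s
  simp only [Matrix.sum_apply, Matrix.smul_apply, smul_eq_mul, h _ i j, Finset.mul_sum,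
    Matrix.zero_apply]
  rw [Finset.sum_comm]
  refine Finset.sum_eq_zero fun s _ => ?_
  rw [← mul_zero (v s i * w s j), ← hug' s, Finset.mul_sum]
  exact Finset.sum_congr rfl fun k _ => by ring

theorem not_hasCPDecomp_two_of_delta_eq_zero [NeZero (2 : F)] (hΔ : Delta (T 0) (T 1) = 0)
    (hT : LinearIndependent F T) (hT' : LinearIndependent F (swapModes T))
    (hΘ : (swapModes T 0).det + (swapModes T 1).det ≠ 0) : ¬HasCPDecomp T 2 := by
  rintro ⟨u, v, w, h⟩
  rw [h.delta_eq, sq_eq_zero_iff, mul_eq_zero, mul_eq_zero] at hΔ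
  rcases hΔ with (hu | hv) | hw
  · exact h.not_linearIndependent hu hT
  · exact hΘ (by rw [h.swapModes.det_slice, h.swapModes.det_slice, hv]; ring)
  · exact h.swapModes.not_linearIndependent hw hT'

theorem HasCPDecomp.delta_nonneg [LinearOrder F] [IsStrictOrderedRing F]
    (h : HasCPDecomp T 2) : 0 ≤ Delta (T 0) (T 1) := by
  obtain ⟨u, v, w, h⟩ := h
  rw [h.delta_eq]
  positivity

end LowerBound

section BinaryForm

variable [Field F] [NeZero (2 : F)] {a b c s : F}

theorem exists_homogeneous_root (h : discrim a b c = s * s) :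
    ∃ x y : F, (x ≠ 0 ∨ y ≠ 0) ∧ a * x ^ 2 + b * (x * y) + c * y ^ 2 = 0 := by
  by_cases ha : a = 0
  · exact ⟨1, 0, Or.inl one_ne_zero, by simp [ha]⟩
  · refine ⟨-b + s, 2 * a, Or.inr (mul_ne_zero two_ne_zero ha), ?_⟩
    rw [discrim] at h
    linear_combination (-a) * h

theorem exists_two_homogeneous_roots (h : discrim a b c = s * s) (hs : s ≠ 0) :
    ∃ G : Matrix (Fin 2) (Fin 2) F, IsUnit G.det ∧
      ∀ k, a * G k 0 ^ 2 + b * (G k 0 * G k 1) + c * G k 1 ^ 2 = 0 := by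
  rw [discrim] at h
  by_cases ha : a = 0
  · have hb : b ≠ 0 := by rintro rfl; apply hs; simpa [ha] using h.symm
    refine ⟨!![1, 0; -c, b], by simpa [det_fin_two] using hb, fun k => ?_⟩
    fin_cases k <;> simp [ha]; ring
  · refine ⟨!![-b + s, 2 * a; -b - s, 2 * a], ?_, fun k => ?_⟩
    · rw [isUnit_iff_ne_zero, det_fin_two_of,
        show (-b + s) * (2 * a) - 2 * a * (-b - s) = 2 * 2 * a * s by ring]
      simp [ha, hs, two_ne_zero]
    · fin_cases k <;> simp <;> linear_combination (-a) * h

end BinaryForm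

theorem hasCPDecomp_two_of_delta_eq_mul_self [Field F] [NeZero (2 : F)]
    {T : Fin 2 → Matrix (Fin 2) (Fin 2) F} {s : F} (h : Delta (T 0) (T 1) = s * s) (hs : s ≠ 0) :
    HasCPDecomp T 2 := by
  rw [delta_eq_discrim] at h
  obtain ⟨G, hG, hroot⟩ := exists_two_homogeneous_roots h hs
  have hdet (k : Fin 2) : (∑ l, G k l • T l).det = 0 := by
    rw [Fin.sum_univ_two, det_smul_add_smul, hroot]
  refine HasCPDecomp.of_mapFirst (T := T) hG ?_
  exact hasCPDecomp_of_slices (r₀ := 1) (r₁ := 1) (hasOuterDecomp_one_of_det_eq_zero (hdet 0))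
    (hasOuterDecomp_one_of_det_eq_zero (hdet 1))

section Real

variable {T : Fin 2 → Matrix (Fin 2) (Fin 2) ℝ}

theorem hasCPDecomp_two_of_delta_pos (h : 0 < Delta (T 0) (T 1)) : HasCPDecomp T 2 :=
  hasCPDecomp_two_of_delta_eq_mul_self (Real.mul_self_sqrt h.le).symm (Real.sqrt_pos.mpr h).ne'

theorem hasCPDecomp_of_rotation {x y : ℝ} {r : ℕ} (hxy : x ≠ 0 ∨ y ≠ 0)
    (h : HasOuterDecomp (x • T 0 + y • T 1) r) : HasCPDecomp T (r + 2) := by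
  have hG : IsUnit !![x, y; -y, x].det := by
    rw [isUnit_iff_ne_zero, det_fin_two_of, show x * x - y * -y = x ^ 2 + y ^ 2 by ring]
    rcases hxy with hx | hy <;> positivity
  refine HasCPDecomp.of_mapFirst (T := T) hG (hasCPDecomp_of_slices ?_ (hasOuterDecomp_two _))
  simpa [Fin.sum_univ_two] using h

theorem hasCPDecomp_two_of_not_linearIndependent (h : ¬LinearIndependent ℝ T) :
    HasCPDecomp T 2 := by
  obtain ⟨g, hg, i, hi⟩ := Fintype.not_linearIndependent_iff.mp h
  rw [Fin.sum_univ_two] at hg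
  refine hasCPDecomp_of_rotation (r := 0) ?_ (hg ▸ hasOuterDecomp_zero)
  fin_cases i
  exacts [Or.inl hi, Or.inr hi]

theorem hasCPDecomp_two_of_det_add_det_eq_zero (hΔ : Delta (T 0) (T 1) = 0)
    (hΘ : (swapModes T 0).det + (swapModes T 1).det = 0) : HasCPDecomp T 2 := by
  rw [← delta_swapModes, Delta] at hΔ
  -- since `det₁ = -det₀`, `Δ` of the swapped tensor is a square plus `4 det₀²`
  have h₀ : (swapModes T 0).det = 0 := by
    nlinarith [sq_nonneg
      ((swapModes T 0 + swapModes T 1).det - (swapModes T 0 - swapModes T 1).det)]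
  have h₁ : (swapModes T 1).det = 0 := by linarith
  exact hasCPDecomp_swapModes_iff.mp <| hasCPDecomp_of_slices
    (hasOuterDecomp_one_of_det_eq_zero h₀) (hasOuterDecomp_one_of_det_eq_zero h₁)

theorem hasCPDecomp_two_iff :
    HasCPDecomp T 2 ↔ 0 ≤ Delta (T 0) (T 1) ∧
      (Delta (T 0) (T 1) = 0 → LinearIndependent ℝ T → LinearIndependent ℝ (swapModes T) →
        (swapModes T 0).det + (swapModes T 1).det = 0) := by
  refine ⟨fun h => ⟨h.delta_nonneg, fun hΔ hT hT' => ?_⟩, fun ⟨hΔ, hdeg⟩ => ?_⟩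
  · by_contra hΘ
    exact not_hasCPDecomp_two_of_delta_eq_zero hΔ hT hT' hΘ h
  rcases hΔ.lt_or_eq with hΔ | hΔ
  · exact hasCPDecomp_two_of_delta_pos hΔ
  by_cases hT : LinearIndependent ℝ T
  · by_cases hT' : LinearIndependent ℝ (swapModes T)
    · exact hasCPDecomp_two_of_det_add_det_eq_zero hΔ.symm (hdeg hΔ.symm hT hT')
    · exact hasCPDecomp_swapModes_iff.mp (hasCPDecomp_two_of_not_linearIndependent hT')
  · exact hasCPDecomp_two_of_not_linearIndependent hT

theorem hasCPDecomp_three (T : Fin 2 → Matrix (Fin 2) (Fin 2) ℝ) : HasCPDecomp T 3 := by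
  rcases le_or_gt 0 (Delta (T 0) (T 1)) with hΔ | hΔ
  · obtain ⟨x, y, hxy, hq⟩ := exists_homogeneous_root (s := √(Delta (T 0) (T 1)))
      (by rw [← delta_eq_discrim, Real.mul_self_sqrt hΔ])
    exact hasCPDecomp_of_rotation hxy
      (hasOuterDecomp_one_of_det_eq_zero (by rw [det_smul_add_smul, hq]))
  set D : Matrix (Fin 2) (Fin 2) ℝ := diagonal ![-1, 1]
  have hsplit : T = ![T 0, T 1 * D] + ![0, T 1 - T 1 * D] := by
    funext k
    fin_cases k <;> simp
  have hflip : 0 < Delta (T 0) (T 1 * D) := by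
    have hdet : (T 1 * D).det = -(T 1).det := by simp [D, det_mul]
    simp only [Delta] at hΔ ⊢
    rw [hdet]
    nlinarith [sq_nonneg ((T 0 + T 1).det - (T 0 - T 1).det),
      sq_nonneg ((T 0 + T 1 * D).det - (T 0 - T 1 * D).det)]
  have hrest : (T 1 - T 1 * D).det = 0 := by
    simp [D, det_fin_two, Matrix.mul_diagonal]
  have hrank1 : HasCPDecomp ![0, T 1 - T 1 * D] (0 + 1) :=
    hasCPDecomp_of_slices hasOuterDecomp_zero (hasOuterDecomp_one_of_det_eq_zero hrest)
  rw [hsplit]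
  exact (hasCPDecomp_two_of_delta_pos (T := ![T 0, T 1 * D]) hflip).add hrank1

end Real

theorem swapModes_col2 [Field F] (a₁ a₂ b₁ b₂ : Fin 2 → F) :
    swapModes ![col2 a₁ a₂, col2 b₁ b₂] = ![col2 a₁ b₁, col2 a₂ b₂] := by
  funext k
  ext i j
  fin_cases k <;> fin_cases j <;> rfl

theorem linearIndependent_col2_iff [Field F] {a₁ a₂ b₁ b₂ : Fin 2 → F} :
    LinearIndependent F ![col2 a₁ a₂, col2 b₁ b₂] ↔
      LinearIndependent F ![Fin.append a₁ a₂, Fin.append b₁ b₂] := by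
  simp only [LinearIndependent.pair_iff]
  refine forall₂_congr fun s t => imp_congr_left ?_
  rw [funext_iff, Fin.forall_fin_add (m := 2) (n := 2)]
  simp only [Pi.add_apply, Pi.smul_apply, Fin.append_left, Fin.append_right]
  simp [← Matrix.ext_iff, Fin.forall_fin_two, col2]
  tauto

theorem stmt10 (a₁ a₂ b₁ b₂ : Fin 2 → ℝ) :
    trank3 ![col2 a₁ a₂, col2 b₁ b₂] = 3 ↔
      Delta (col2 a₁ a₂) (col2 b₁ b₂) < 0 ∨
      (LinearIndependent ℝ ![Fin.append a₁ a₂, Fin.append b₁ b₂] ∧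
       LinearIndependent ℝ ![Fin.append a₁ b₁, Fin.append a₂ b₂] ∧
       Delta (col2 a₁ a₂) (col2 b₁ b₂) = 0 ∧
       (col2 a₁ b₁).det + (col2 a₂ b₂).det ≠ 0) := by
  rw [trank3_eq_three_iff (hasCPDecomp_three _), hasCPDecomp_two_iff, swapModes_col2,
    linearIndependent_col2_iff, linearIndependent_col2_iff]
  simp only [Matrix.cons_val_zero, Matrix.cons_val_one, not_and_or, not_le, Classical.not_imp]
  tauto
end

section
/- Let A and B be real 2×2×2 tensors such that A = T₁ + T₂ with T₁, T₂ rank-one tensors. If there exists a real number x such that Δ(B + xT₁) > 0, then the 2×2×2×2 tensor (A;B) has rank at most 4. -/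
open Matrix BigOperators

/-!
A 2×2×2 tensor `S` with `Δ(S) > 0` is a sum of two rank-one tensors: `Δ(S)` is the discriminant
of the binary quadratic form `(s, t) ↦ det (s • S₀ + t • S₁)`, which therefore has two
independent real zeros; the corresponding members of the pencil are singular, hence rank one,
and they span the pencil. Applied to `S = B + x T₁`, this writes `(A; B)` as
`(T₁; -x T₁) + (T₂; 0) + (0; S)`, a sum of `1 + 1 + 2` rank-one tensors.
-/

section Field

variable {F : Type*} [Field F]

theorem Matrix.exists_eq_vecMulVec_of_det_eq_zero {M : Matrix (Fin 2) (Fin 2) F}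
    (h : M.det = 0) : ∃ v w : Fin 2 → F, M = vecMulVec v w := by
  rw [det_fin_two] at h
  by_cases h00 : M 0 0 = 0
  · by_cases h01 : M 0 1 = 0
    · refine ⟨![0, 1], M 1, ?_⟩
      ext i j
      fin_cases i <;> fin_cases j <;> simp [vecMulVec_apply, h00, h01]
    · refine ⟨![1, M 1 1 / M 0 1], M 0, ?_⟩
      ext i j
      fin_cases i <;> fin_cases j <;> simp [vecMulVec_apply]
      all_goals field_simp
      linear_combination -h
  · refine ⟨![1, M 1 0 / M 0 0], M 0, ?_⟩
    ext i j
    fin_cases i <;> fin_cases j <;> simp [vecMulVec_apply]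
    all_goals field_simp
    linear_combination h

theorem exists_eq_of_trank3_eq_one {T : Fin 2 → Matrix (Fin 2) (Fin 2) F} (h : trank3 T = 1) :
    ∃ u v w : Fin 2 → F, ∀ k i j, T k i j = u k * v i * w j := by
  have hmem := Nat.sInf_mem (Nat.nonempty_of_sInf_eq_succ h)
  rw [← trank3, h] at hmem
  obtain ⟨u, v, w, huvw⟩ := hmem
  exact ⟨u 0, v 0, w 0, fun k i j => by simpa using huvw k i j⟩

theorem exists_two_term_of_singular_pencil (S : Fin 2 → Matrix (Fin 2) (Fin 2) F)
    (s t : Fin 2 → F) (hdet : ∀ n, (s n • S 0 + t n • S 1).det = 0)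
    (hst : s 0 * t 1 - s 1 * t 0 ≠ 0) :
    ∃ α β v₀ w₀ v₁ w₁ : Fin 2 → F,
      ∀ l i j, S l i j = α l * v₀ i * w₀ j + β l * v₁ i * w₁ j := by
  obtain ⟨v₀, w₀, h₀⟩ := exists_eq_vecMulVec_of_det_eq_zero (hdet 0)
  obtain ⟨v₁, w₁, h₁⟩ := exists_eq_vecMulVec_of_det_eq_zero (hdet 1)
  set δ := s 0 * t 1 - s 1 * t 0
  refine ⟨![t 1 / δ, -s 1 / δ], ![-t 0 / δ, s 0 / δ], v₀, w₀, v₁, w₁, fun l i j => ?_⟩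
  have e₀ := congrFun (congrFun h₀ i) j
  have e₁ := congrFun (congrFun h₁ i) j
  simp only [Matrix.add_apply, Matrix.smul_apply, smul_eq_mul, vecMulVec_apply] at e₀ e₁
  fin_cases l <;> simp only [Fin.zero_eta, Fin.mk_one, cons_val_zero, cons_val_one] <;>
    field_simp
  · linear_combination (t 1) * e₀ - (t 0) * e₁
  · linear_combination (s 0) * e₁ - (s 1) * e₀

end Field

section CharNeTwo

variable {F : Type*} [Field F] [NeZero (2 : F)]

theorem det_smul_add_smul_s12 (X Y : Matrix (Fin 2) (Fin 2) F) (s t : F) :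
    (s • X + t • Y).det
      = X.det * s ^ 2 + ((X + Y).det - (X - Y).det) / 2 * (s * t) + Y.det * t ^ 2 := by
  simp only [det_fin_two, Matrix.add_apply, Matrix.sub_apply, Matrix.smul_apply, smul_eq_mul]
  field_simp
  ring

theorem Delta_eq_discrim (X Y : Matrix (Fin 2) (Fin 2) F) :
    Delta X Y = discrim X.det (((X + Y).det - (X - Y).det) / 2) Y.det := by
  have h4 : (4 : F) ≠ 0 := by
    have := pow_ne_zero 2 (two_ne_zero (α := F))
    norm_num at this
    exact this
  rw [Delta, discrim]
  field_simp
  ring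

theorem exists_independent_zeros_of_discrim_eq_mul_self {a b c d : F}
    (hd : discrim a b c = d * d) (hd0 : d ≠ 0) :
    ∃ s t : Fin 2 → F, (∀ n, a * s n ^ 2 + b * (s n * t n) + c * t n ^ 2 = 0) ∧
      s 0 * t 1 - s 1 * t 0 ≠ 0 := by
  rw [discrim] at hd
  by_cases ha : a = 0
  · subst ha
    have hb : b ≠ 0 := by
      rintro rfl
      exact hd0 (mul_self_eq_zero.1 (by simpa using hd.symm))
    refine ⟨![1, c], ![0, -b], fun n => ?_, by simpa using hb⟩
    fin_cases n <;> simp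
    ring
  · refine ⟨![-b + d, -b - d], ![2 * a, 2 * a], fun n => ?_, ?_⟩
    · fin_cases n <;> simp <;> linear_combination (-a) * hd
    · have hδ : (-b + d) * (2 * a) - (-b - d) * (2 * a) = 2 * (2 * (a * d)) := by ring
      simpa [hδ] using mul_ne_zero two_ne_zero (mul_ne_zero two_ne_zero (mul_ne_zero ha hd0))

end CharNeTwo

theorem exists_two_term_of_Delta_pos (S : Fin 2 → Matrix (Fin 2) (Fin 2) ℝ)
    (h : 0 < Delta (S 0) (S 1)) :
    ∃ α β v₀ w₀ v₁ w₁ : Fin 2 → ℝ,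
      ∀ l i j, S l i j = α l * v₀ i * w₀ j + β l * v₁ i * w₁ j := by
  rw [Delta_eq_discrim] at h
  obtain ⟨s, t, hzero, hst⟩ := exists_independent_zeros_of_discrim_eq_mul_self
    (Real.mul_self_sqrt h.le).symm (Real.sqrt_pos.2 h).ne'
  refine exists_two_term_of_singular_pencil S s t (fun n => ?_) hst
  rw [det_smul_add_smul_s12]
  linear_combination hzero n

theorem stmt12 (A B T₁ T₂ : Fin 2 → Matrix (Fin 2) (Fin 2) ℝ)
    (h₁ : trank3 T₁ = 1) (h₂ : trank3 T₂ = 1) (hA : A = T₁ + T₂)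
    (hx : ∃ x : ℝ, 0 < Delta ((B + x • T₁) 0) ((B + x • T₁) 1)) :
    trank4 ![A, B] ≤ 4 := by
  obtain ⟨x, hx⟩ := hx
  obtain ⟨p₁, q₁, r₁, hT₁⟩ := exists_eq_of_trank3_eq_one h₁
  obtain ⟨p₂, q₂, r₂, hT₂⟩ := exists_eq_of_trank3_eq_one h₂
  obtain ⟨α, β, v₀, w₀, v₁, w₁, hS⟩ := exists_two_term_of_Delta_pos (B + x • T₁) hx
  subst hA
  refine Nat.sInf_le ⟨![![1, -x], ![1, 0], ![0, 1], ![0, 1]], ![p₁, p₂, α, β],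
    ![q₁, q₂, v₀, v₁], ![r₁, r₂, w₀, w₁], fun k l i j => ?_⟩
  have hSlij := hS l i j
  simp only [Pi.add_apply, Pi.smul_apply, Matrix.add_apply, Matrix.smul_apply, smul_eq_mul,
    hT₁] at hSlij
  fin_cases k
  · simp [Fin.sum_univ_four, hT₁, hT₂]
  · simp only [Fin.sum_univ_four, Fin.mk_one, cons_val_zero, cons_val_one, cons_val,
      cons_val_fin_one]
    linear_combination hSlij
end

section
/- Every real 2×2×2×2 tensor has rank at most 5. -/
open Matrix BigOperators

/-! ### Auxiliary lemmas -/

lemma det2 (M : Matrix (Fin 2) (Fin 2) ℝ) : M.det = M 0 0 * M 1 1 - M 0 1 * M 1 0 :=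
  Matrix.det_fin_two M

lemma rank1_of_det0 (M : Matrix (Fin 2) (Fin 2) ℝ) (h : M.det = 0) :
    ∃ v w : Fin 2 → ℝ, ∀ i j, M i j = v i * w j := by
  rw [det2] at h
  by_cases h00 : M 0 0 ≠ 0
  · refine ⟨![M 0 0, M 1 0], ![1, M 0 1 / M 0 0], ?_⟩
    intro i j; fin_cases i <;> fin_cases j
    · simp
    · simp; field_simp
    · simp
    · simp; field_simp; linear_combination h
  · push_neg at h00
    by_cases h10 : M 1 0 = 0
    · refine ⟨![M 0 1, M 1 1], ![0, 1], ?_⟩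
      intro i j; fin_cases i <;> fin_cases j <;> simp [h00, h10]
    · have h01 : M 0 1 = 0 := by
        rcases mul_eq_zero.1 (by linear_combination -h + M 1 1 * h00 : M 0 1 * M 1 0 = 0) with h' | h'
        · exact h'
        · exact absurd h' h10
      refine ⟨![0, 1], ![M 1 0, M 1 1], ?_⟩
      intro i j; fin_cases i <;> fin_cases j <;> simp [h00, h01]

/-- The middle coefficient of the pencil determinant. -/
noncomputable def cmid (A B : Matrix (Fin 2) (Fin 2) ℝ) : ℝ := ((A + B).det - (A - B).det) / 2

lemma det_pencil (A B : Matrix (Fin 2) (Fin 2) ℝ) (α β : ℝ) :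
    (Matrix.of fun i j => α * A i j + β * B i j).det
      = α ^ 2 * A.det + α * β * cmid A B + β ^ 2 * B.det := by
  simp only [det2, Matrix.of_apply, cmid, Matrix.add_apply, Matrix.sub_apply]
  ring

lemma delta_cmid (A B : Matrix (Fin 2) (Fin 2) ℝ) :
    Delta A B = cmid A B ^ 2 - 4 * A.det * B.det := by
  simp only [Delta, cmid]; ring

lemma decRank2core (A B : Matrix (Fin 2) (Fin 2) ℝ) (hdA : A.det ≠ 0) (h : 0 < Delta A B) :
    ∃ f v w : Fin 2 → Fin 2 → ℝ,
      (∀ i j, A i j = ∑ s : Fin 2, f s 0 * v s i * w s j) ∧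
      (∀ i j, B i j = ∑ s : Fin 2, f s 1 * v s i * w s j) := by
  set c := cmid A B with hc
  have hΔ : Delta A B = c ^ 2 - 4 * A.det * B.det := delta_cmid A B
  set r := Real.sqrt (Delta A B) with hrdef
  have hr2 : r ^ 2 = c ^ 2 - 4 * A.det * B.det := by
    rw [← hΔ, hrdef]; rw [sq]; exact Real.mul_self_sqrt h.le
  have hr : 0 < r := Real.sqrt_pos.2 h
  set M₁ : Matrix (Fin 2) (Fin 2) ℝ := Matrix.of fun i j => (-c + r) * A i j + 2 * A.det * B i j with hM₁
  set M₂ : Matrix (Fin 2) (Fin 2) ℝ := Matrix.of fun i j => (-c - r) * A i j + 2 * A.det * B i j with hM₂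
  have hd1 : M₁.det = 0 := by
    rw [hM₁, det_pencil]; rw [← hc]; linear_combination A.det * hr2
  have hd2 : M₂.det = 0 := by
    rw [hM₂, det_pencil]; rw [← hc]; linear_combination A.det * hr2
  obtain ⟨v1, w1, hvw1⟩ := rank1_of_det0 M₁ hd1
  obtain ⟨v2, w2, hvw2⟩ := rank1_of_det0 M₂ hd2
  refine ⟨![![1/(2*r), (c+r)/(4*r*A.det)], ![-(1/(2*r)), (r-c)/(4*r*A.det)]],
      ![v1, v2], ![w1, w2], ?_, ?_⟩
  · intro i j
    have e1 : (-c + r) * A i j + 2 * A.det * B i j = v1 i * w1 j := hvw1 i j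
    have e2 : (-c - r) * A i j + 2 * A.det * B i j = v2 i * w2 j := hvw2 i j
    simp only [Fin.sum_univ_two, Matrix.cons_val_zero, Matrix.cons_val_one, Matrix.head_cons]
    field_simp
    linear_combination e1 - e2
  · intro i j
    have e1 : (-c + r) * A i j + 2 * A.det * B i j = v1 i * w1 j := hvw1 i j
    have e2 : (-c - r) * A i j + 2 * A.det * B i j = v2 i * w2 j := hvw2 i j
    simp only [Fin.sum_univ_two, Matrix.cons_val_zero, Matrix.cons_val_one, Matrix.head_cons]
    field_simp
    linear_combination (c + r) * e1 + (r - c) * e2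

lemma DeltaExpand (A B : Matrix (Fin 2) (Fin 2) ℝ) :
    Delta A B = ((A 0 0 + B 0 0) * (A 1 1 + B 1 1) - (A 0 1 + B 0 1) * (A 1 0 + B 1 0)
      - ((A 0 0 - B 0 0) * (A 1 1 - B 1 1) - (A 0 1 - B 0 1) * (A 1 0 - B 1 0))) ^ 2 / 4
      - 4 * (A 0 0 * A 1 1 - A 0 1 * A 1 0) * (B 0 0 * B 1 1 - B 0 1 * B 1 0) := by
  simp [Delta, det2]

lemma delta_shear (A B : Matrix (Fin 2) (Fin 2) ℝ) (t : ℝ) :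
    Delta (Matrix.of fun i j => A i j + t * B i j) B = Delta A B := by
  rw [DeltaExpand, DeltaExpand]
  simp only [Matrix.of_apply, Matrix.add_apply, Matrix.sub_apply]
  ring

lemma decRank2 (A B : Matrix (Fin 2) (Fin 2) ℝ) (h : 0 < Delta A B) :
    ∃ f v w : Fin 2 → Fin 2 → ℝ,
      (∀ i j, A i j = ∑ s : Fin 2, f s 0 * v s i * w s j) ∧
      (∀ i j, B i j = ∑ s : Fin 2, f s 1 * v s i * w s j) := by
  by_cases hdA : A.det ≠ 0
  · exact decRank2core A B hdA h
  · push_neg at hdA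
    have hdet_t : ∀ t : ℝ, (Matrix.of fun i j => A i j + t * B i j).det
        = t * cmid A B + t ^ 2 * B.det := by
      intro t
      have := det_pencil A B 1 t
      simp only [one_mul, one_pow] at this
      rw [this, hdA]; ring
    by_cases h1 : (Matrix.of fun i j => A i j + 1 * B i j).det ≠ 0
    · obtain ⟨f, v, w, hA', hB'⟩ := decRank2core _ B h1 (by rw [delta_shear]; exact h)
      refine ⟨fun s => ![f s 0 - f s 1, f s 1], v, w, ?_, ?_⟩
      · intro i j
        have e1 := hA' i j
        have e2 := hB' i j
        simp only [Matrix.of_apply, Fin.sum_univ_two] at e1 e2 ⊢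
        simp only [Matrix.cons_val_zero, Matrix.cons_val_one, Matrix.head_cons]
        linear_combination e1 - e2
      · intro i j
        have e2 := hB' i j
        simp only [Fin.sum_univ_two] at e2 ⊢
        simp only [Matrix.cons_val_zero, Matrix.cons_val_one, Matrix.head_cons]
        linear_combination e2
    · push_neg at h1
      have h2 : (Matrix.of fun i j => A i j + (-1) * B i j).det ≠ 0 := by
        rw [hdet_t] at h1 ⊢
        intro h2
        have hc0 : cmid A B = 0 := by linarith [h1, h2]
        have hb0 : B.det = 0 := by nlinarith [h1, h2]
        rw [delta_cmid, hc0, hdA] at h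
        simp at h
      obtain ⟨f, v, w, hA', hB'⟩ := decRank2core _ B h2 (by rw [delta_shear]; exact h)
      refine ⟨fun s => ![f s 0 + f s 1, f s 1], v, w, ?_, ?_⟩
      · intro i j
        have e1 := hA' i j
        have e2 := hB' i j
        simp only [Matrix.of_apply, Fin.sum_univ_two] at e1 e2 ⊢
        simp only [Matrix.cons_val_zero, Matrix.cons_val_one, Matrix.head_cons]
        linear_combination e1 + e2
      · intro i j
        have e2 := hB' i j
        simp only [Fin.sum_univ_two] at e2 ⊢
        simp only [Matrix.cons_val_zero, Matrix.cons_val_one, Matrix.head_cons]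
        linear_combination e2

def gfun (M : Matrix (Fin 2) (Fin 2) ℝ) (c d : Fin 2 → ℝ) : ℝ :=
  c 0 * d 0 * M 1 1 - c 1 * d 0 * M 0 1 - c 0 * d 1 * M 1 0 + c 1 * d 1 * M 0 0

def Pform (A B : Matrix (Fin 2) (Fin 2) ℝ) (b c d : Fin 2 → ℝ) : ℝ :=
  b 0 * gfun B c d - b 1 * gfun A c d

lemma key (A B : Matrix (Fin 2) (Fin 2) ℝ) (b c d : Fin 2 → ℝ) :
    ∃ s0 : ℝ, ∀ lam : ℝ,
      Delta (Matrix.of fun i j => A i j - lam * b 0 * c i * d j)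
            (Matrix.of fun i j => B i j - lam * b 1 * c i * d j)
        = Delta A B + s0 * lam + (Pform A B b c d) ^ 2 * lam ^ 2 := by
  refine ⟨-((A + B).det - (A - B).det) * (b 0 * gfun B c d + b 1 * gfun A c d)
      + 4 * (A.det * b 1 * gfun B c d + B.det * b 0 * gfun A c d), ?_⟩
  intro lam
  rw [DeltaExpand, DeltaExpand]
  simp only [Matrix.of_apply, det2, Matrix.add_apply, Matrix.sub_apply, gfun, Pform]
  ring

lemma common_pt (f g : (Fin 2 → ℝ) → ℝ)
    (hf : ∀ x y : Fin 2 → ℝ, ∀ t : ℝ, f (fun m => x m + t * y m) = f x + t * f y)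
    (hg : ∀ x y : Fin 2 → ℝ, ∀ t : ℝ, g (fun m => x m + t * y m) = g x + t * g y)
    (p q : Fin 2 → ℝ) (hp : f p ≠ 0) (hq : g q ≠ 0) :
    ∃ x, f x ≠ 0 ∧ g x ≠ 0 := by
  by_cases hgp : g p ≠ 0
  · exact ⟨p, hp, hgp⟩
  · push_neg at hgp
    by_cases h1 : f (fun m => p m + 1 * q m) ≠ 0
    · refine ⟨fun m => p m + 1 * q m, h1, ?_⟩
      rw [hg, hgp]; simpa using hq
    · push_neg at h1
      refine ⟨fun m => p m + (-1) * q m, ?_, ?_⟩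
      · rw [hf]
        rw [hf] at h1
        intro h2
        apply hp
        linarith [h1, h2]
      · rw [hg, hgp]; simpa using hq

lemma exists_good (A0 B0 A1 B1 : Matrix (Fin 2) (Fin 2) ℝ)
    (b0 c0 d0 : Fin 2 → ℝ) (h0 : Pform A0 B0 b0 c0 d0 ≠ 0)
    (b1 c1 d1 : Fin 2 → ℝ) (h1 : Pform A1 B1 b1 c1 d1 ≠ 0) :
    ∃ b c d, Pform A0 B0 b c d ≠ 0 ∧ Pform A1 B1 b c d ≠ 0 := by
  obtain ⟨b, hb0, hb1⟩ := common_pt (fun b => Pform A0 B0 b c0 d0) (fun b => Pform A1 B1 b c1 d1)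
    (by intro x y t; simp only [Pform, gfun]; ring)
    (by intro x y t; simp only [Pform, gfun]; ring) b0 b1 h0 h1
  obtain ⟨c, hc0, hc1⟩ := common_pt (fun c => Pform A0 B0 b c d0) (fun c => Pform A1 B1 b c d1)
    (by intro x y t; simp only [Pform, gfun]; ring)
    (by intro x y t; simp only [Pform, gfun]; ring) c0 c1 hb0 hb1
  obtain ⟨d, hd0, hd1⟩ := common_pt (fun d => Pform A0 B0 b c d) (fun d => Pform A1 B1 b c d)
    (by intro x y t; simp only [Pform, gfun]; ring)
    (by intro x y t; simp only [Pform, gfun]; ring) d0 d1 hc0 hc1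
  exact ⟨b, c, d, hd0, hd1⟩

lemma Pwit (A B : Matrix (Fin 2) (Fin 2) ℝ) (l i j : Fin 2)
    (h : (if l = 0 then A else B) i j ≠ 0) :
    ∃ b c d, Pform A B b c d ≠ 0 := by
  fin_cases l <;> fin_cases i <;> fin_cases j <;> simp at h
  · exact ⟨![0,1], ![0,1], ![0,1], by simpa [Pform, gfun] using h⟩
  · exact ⟨![0,1], ![0,1], ![1,0], by simpa [Pform, gfun] using h⟩
  · exact ⟨![0,1], ![1,0], ![0,1], by simpa [Pform, gfun] using h⟩
  · exact ⟨![0,1], ![1,0], ![1,0], by simpa [Pform, gfun] using h⟩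
  · exact ⟨![1,0], ![0,1], ![0,1], by simpa [Pform, gfun] using h⟩
  · exact ⟨![1,0], ![0,1], ![1,0], by simpa [Pform, gfun] using h⟩
  · exact ⟨![1,0], ![1,0], ![0,1], by simpa [Pform, gfun] using h⟩
  · exact ⟨![1,0], ![1,0], ![1,0], by simpa [Pform, gfun] using h⟩

lemma bigpos (d0 s K : ℝ) (hK : K ≠ 0) : ∃ lam : ℝ, 0 < d0 + s * lam + K ^ 2 * lam ^ 2 := by
  have hK2 : 0 < K ^ 2 := by positivity
  obtain ⟨x, hx1, hx2⟩ : ∃ x : ℝ, 1 ≤ x ∧ K ^ 2 * x = 1 + |d0| + |s| + K ^ 2 := by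
    refine ⟨(1 + |d0| + |s| + K ^ 2) / K ^ 2, ?_, by field_simp⟩
    rw [le_div_iff₀ hK2]
    nlinarith [abs_nonneg d0, abs_nonneg s]
  have hx0 : 0 < x := lt_of_lt_of_le one_pos hx1
  refine ⟨x, ?_⟩
  have e1 : K ^ 2 * x ^ 2 = (1 + |d0| + |s| + K ^ 2) * x := by linear_combination x * hx2
  have e2 : |d0| ≤ |d0| * x := by nlinarith [abs_nonneg d0]
  have e3 : -(s * x) ≤ |s| * x := by nlinarith [neg_abs_le s]
  have e4 : 0 < K ^ 2 * x := by positivity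
  have e5 : -d0 ≤ |d0| := by nlinarith [neg_abs_le d0, abs_nonneg d0, le_abs_self d0]
  nlinarith [hx1]

/-- Given a nonzero 2×2×2 slice, find λ and a rank-2 decomposition of the perturbed slice. -/
lemma slice_dec (A B : Matrix (Fin 2) (Fin 2) ℝ) (b c d : Fin 2 → ℝ)
    (hP : Pform A B b c d ≠ 0) :
    ∃ lam : ℝ, ∃ f v w : Fin 2 → Fin 2 → ℝ,
      (∀ i j, A i j - lam * b 0 * c i * d j = ∑ s : Fin 2, f s 0 * v s i * w s j) ∧
      (∀ i j, B i j - lam * b 1 * c i * d j = ∑ s : Fin 2, f s 1 * v s i * w s j) := by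
  obtain ⟨s0, hkey⟩ := key A B b c d
  obtain ⟨lam, hlam⟩ := bigpos (Delta A B) s0 (Pform A B b c d) hP
  have hpos : 0 < Delta (Matrix.of fun i j => A i j - lam * b 0 * c i * d j)
      (Matrix.of fun i j => B i j - lam * b 1 * c i * d j) := by
    rw [hkey lam]; linarith [hlam]
  obtain ⟨f, v, w, hA', hB'⟩ := decRank2 _ _ hpos
  refine ⟨lam, f, v, w, ?_, ?_⟩
  · intro i j; have := hA' i j; simpa using this
  · intro i j; have := hB' i j; simpa using this

theorem stmt15 (T : Fin 2 → Fin 2 → Matrix (Fin 2) (Fin 2) ℝ) :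
    trank4 T ≤ 5 := by
  have main : ∃ u v w z : Fin 5 → Fin 2 → ℝ,
      ∀ k l i j, T k l i j = ∑ s, u s k * v s l * w s i * z s j := by
    by_cases hz0 : ∀ l i j, T 0 l i j = 0
    · refine ⟨![![0,1],![0,1],![0,1],![0,1],![0,0]],
        ![fun l => T 1 l 0 0, fun l => T 1 l 0 1, fun l => T 1 l 1 0, fun l => T 1 l 1 1, fun _ => 0],
        ![![1,0],![1,0],![0,1],![0,1],![0,0]],
        ![![1,0],![0,1],![1,0],![0,1],![0,0]], ?_⟩
      intro k l i j
      fin_cases k <;> fin_cases i <;> fin_cases j <;>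
        simp [Fin.sum_univ_five, Fin.mk_zero, Fin.mk_one, Matrix.vecHead, Matrix.vecTail, hz0]
    · by_cases hz1 : ∀ l i j, T 1 l i j = 0
      · refine ⟨![![1,0],![1,0],![1,0],![1,0],![0,0]],
          ![fun l => T 0 l 0 0, fun l => T 0 l 0 1, fun l => T 0 l 1 0, fun l => T 0 l 1 1, fun _ => 0],
          ![![1,0],![1,0],![0,1],![0,1],![0,0]],
          ![![1,0],![0,1],![1,0],![0,1],![0,0]], ?_⟩
        intro k l i j
        fin_cases k <;> fin_cases i <;> fin_cases j <;>
          simp [Fin.sum_univ_five, Fin.mk_zero, Fin.mk_one, Matrix.vecHead, Matrix.vecTail, hz1]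
      · push_neg at hz0 hz1
        obtain ⟨l0, i0, j0, h0⟩ := hz0
        obtain ⟨l1, i1, j1, h1⟩ := hz1
        have hw0 : ∃ b c d, Pform (T 0 0) (T 0 1) b c d ≠ 0 := by
          apply Pwit (T 0 0) (T 0 1) l0 i0 j0
          fin_cases l0 <;> simpa using h0
        have hw1 : ∃ b c d, Pform (T 1 0) (T 1 1) b c d ≠ 0 := by
          apply Pwit (T 1 0) (T 1 1) l1 i1 j1
          fin_cases l1 <;> simpa using h1
        obtain ⟨b0', c0', d0', hP0'⟩ := hw0
        obtain ⟨b1', c1', d1', hP1'⟩ := hw1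
        obtain ⟨b, c, d, hP0, hP1⟩ :=
          exists_good (T 0 0) (T 0 1) (T 1 0) (T 1 1) b0' c0' d0' hP0' b1' c1' d1' hP1'
        obtain ⟨lam0, f0, v0, w0, hA0, hB0⟩ := slice_dec (T 0 0) (T 0 1) b c d hP0
        obtain ⟨lam1, f1, v1, w1, hA1, hB1⟩ := slice_dec (T 1 0) (T 1 1) b c d hP1
        refine ⟨![![1,0],![1,0],![0,1],![0,1],![lam0,lam1]],
          ![f0 0, f0 1, f1 0, f1 1, b],
          ![v0 0, v0 1, v1 0, v1 1, c],
          ![w0 0, w0 1, w1 0, w1 1, d], ?_⟩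
        intro k l i j
        have eA0 := hA0 i j; have eB0 := hB0 i j
        have eA1 := hA1 i j; have eB1 := hB1 i j
        simp only [Fin.sum_univ_two] at eA0 eB0 eA1 eB1
        fin_cases k <;> fin_cases l <;>
          simp only [Fin.sum_univ_five, Fin.mk_zero, Fin.mk_one, Matrix.cons_val_zero,
            Matrix.cons_val_one, Matrix.head_cons, Matrix.cons_val_two, Matrix.tail_cons,
            Matrix.cons_val_three, Matrix.cons_val_four, Matrix.cons_val_fin_one]
        · linear_combination eA0
        · linear_combination eB0
        · linear_combination eA1
        · linear_combination eB1
  obtain ⟨u, v, w, z, h⟩ := main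
  exact Nat.sInf_le ⟨u, v, w, z, h⟩
end
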